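/- Let q be a prime power and k ≤ n ≤ m positive integers. Let g = (g_1, …, g_n) ∈ F_{q^m}^n have coordinates linearly independent over F_q, and let Gab(g) be the F_{q^m}-linear code generated by the k×n Moore matrix G with entries G_{ij} = g_j^{q^{i-1}}. Then every nonzero codeword c ∈ Gab(g) has rank weight Rk(c) ≥ n − k + 1, where Rk(c) is the dimension over F_q of the F_q-subspace of F_{q^m} spanned by the coordinates of c. Equivalently, the minimum rank distance of Gab(g) is at least n − k + 1. -/

import Mathlib

/-!
A codeword `∑ᵢ xᵢ • Gᵢ` of the Gabidulin code is `(L g₁, …, L gₙ)` for the `q`-linearized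
polynomial `L = ∑ᵢ xᵢ X ^ q ^ i`, which is `F_q`-linear because Frobenius is. Hence its rank weight
is the dimension of `L (span g)`, which by rank–nullity is at least `n - dim (ker L)`. The kernel
consists of roots of a nonzero polynomial of degree at most `q ^ (k - 1)`, so as an `F_q`-space it
has dimension less than `k`.
-/

open Matrix

/-- The rank weight of a vector over the extension `K` of `Fq`: the dimension over `Fq`
of the `Fq`-subspace of `K` spanned by the coordinates of the vector. -/
noncomputable def rankWeight (Fq : Type) {K : Type} [Field Fq] [Field K] [Algebra Fq K]
    {ι : Type} (v : ι → K) : ℕ :=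
  Module.finrank Fq (Submodule.span Fq (Set.range v))

open Module Polynomial

theorem LinearMap.finrank_le_finrank_map_add_finrank_ker {K M N : Type*} [DivisionRing K]
    [AddCommGroup M] [Module K M] [AddCommGroup N] [Module K N] (f : M →ₗ[K] N)
    (V : Submodule K M) [FiniteDimensional K V] [FiniteDimensional K (LinearMap.ker f)] :
    finrank K V ≤ finrank K (V.map f) + finrank K (LinearMap.ker f) := by
  have hrank := (f.domRestrict V).finrank_range_add_finrank_ker
  rw [LinearMap.range_domRestrict, LinearMap.ker_domRestrict,
    ← Submodule.finrank_map_subtype_eq, Submodule.map_comap_subtype] at hrank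
  have := Submodule.finrank_mono (inf_le_right : V ⊓ LinearMap.ker f ≤ LinearMap.ker f)
  omega

theorem rankWeight_map {F L ι : Type} [Field F] [Field L] [Algebra F L] (f : L →ₗ[F] L)
    (v : ι → L) :
    rankWeight F (fun i => f (v i)) = finrank F ((Submodule.span F (Set.range v)).map f) := by
  rw [rankWeight, ← Submodule.span_image, ← Set.range_comp]
  rfl

theorem one_le_rankWeight {F L ι : Type} [Field F] [Field L] [Algebra F L] [Finite ι]
    {v : ι → L} (hv : v ≠ 0) : 1 ≤ rankWeight F v := by
  have := FiniteDimensional.span_of_finite F (Set.finite_range v)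
  rw [rankWeight, Submodule.one_le_finrank_iff, Ne, Submodule.span_eq_bot]
  obtain ⟨i, hi⟩ := Function.ne_iff.mp hv
  exact fun h => hi (h _ (Set.mem_range_self i))

namespace Polynomial

variable {L : Type*} [Field L] {k : ℕ}

noncomputable def linearized (q : ℕ) (x : Fin k → L) : L[X] :=
  ∑ i, C (x i) * X ^ q ^ (i : ℕ)

theorem natDegree_linearized_le {q : ℕ} (hq : 0 < q) (x : Fin k → L) :
    (linearized q x).natDegree ≤ q ^ (k - 1) :=
  natDegree_sum_le_of_forall_le _ _ fun i _ =>
    (natDegree_C_mul_X_pow_le _ _).trans (Nat.pow_le_pow_right hq (by omega))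

theorem coeff_linearized {q : ℕ} (hq : 1 < q) (x : Fin k → L) (i : Fin k) :
    (linearized q x).coeff (q ^ (i : ℕ)) = x i := by
  rw [linearized, finsetSum_coeff, Finset.sum_eq_single i]
  · simp
  · intro j _ hji
    simp [coeff_X_pow, (Nat.pow_right_injective hq).eq_iff, Fin.val_eq_val, hji.symm]
  · simp

theorem linearized_ne_zero {q : ℕ} (hq : 1 < q) {x : Fin k → L} (hx : x ≠ 0) :
    linearized q x ≠ 0 := by
  obtain ⟨i, hi⟩ := Function.ne_iff.mp hx
  exact fun h => hi (by simpa [h] using (coeff_linearized hq x i).symm)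

end Polynomial

namespace FiniteField

variable (F : Type*) {L : Type*} [Field F] [Fintype F] [Field L] [Algebra F L] {k : ℕ}

noncomputable def linearizedMap (x : Fin k → L) : L →ₗ[F] L :=
  ∑ i, x i • ((frobeniusAlgHom F L) ^ (i : ℕ)).toLinearMap

theorem linearizedMap_apply (x : Fin k → L) (y : L) :
    linearizedMap F x y = ∑ i, x i * y ^ Fintype.card F ^ (i : ℕ) := by
  simp [linearizedMap, AlgHom.coe_pow, coe_frobeniusAlgHom, pow_iterate]

theorem eval_linearized (x : Fin k → L) (y : L) :
    (linearized (Fintype.card F) x).eval y = linearizedMap F x y := by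
  simp [linearized, linearizedMap_apply, eval_finsetSum]

theorem natCard_ker_linearizedMap_le [Finite L] {x : Fin k → L} (hx : x ≠ 0) :
    Nat.card (LinearMap.ker (linearizedMap F x)) ≤ Fintype.card F ^ (k - 1) := by
  classical
  have := Fintype.ofFinite L
  let P := linearized (Fintype.card F) x
  have hroots : (Finset.univ.filter fun y => linearizedMap F x y = 0).val ⊆ P.roots :=
    fun y hy => by simpa [P, linearized_ne_zero Fintype.one_lt_card hx, eval_linearized] using hy
  calc Nat.card (LinearMap.ker (linearizedMap F x))
      = (Finset.univ.filter fun y => linearizedMap F x y = 0).card := by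
        rw [Nat.card_eq_fintype_card, ← Fintype.card_subtype]; rfl
    _ ≤ P.natDegree := card_le_degree_of_subset_roots hroots
    _ ≤ Fintype.card F ^ (k - 1) := natDegree_linearized_le Fintype.card_pos x

theorem finrank_ker_linearizedMap_lt [Finite L] {x : Fin k → L} (hx : x ≠ 0) :
    finrank F (LinearMap.ker (linearizedMap F x)) < k := by
  classical
  have := Fintype.ofFinite L
  have hcard := natCard_ker_linearizedMap_le F hx
  rw [Nat.card_eq_fintype_card, Module.card_eq_pow_finrank (K := F)] at hcard
  obtain ⟨i, -⟩ := Function.ne_iff.mp hx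
  have hle := (Nat.pow_le_pow_iff_right Fintype.one_lt_card).mp hcard
  have hk : 0 < k := i.pos
  omega

theorem exists_eq_linearizedMap_of_mem_span_rows {n : ℕ} {g : Fin n → L}
    {G : Matrix (Fin k) (Fin n) L} (hG : ∀ i j, G i j = g j ^ Fintype.card F ^ (i : ℕ))
    {c : Fin n → L} (hc : c ∈ Submodule.span L (Set.range fun i => G i)) :
    ∃ x : Fin k → L, c = fun j => linearizedMap F x (g j) := by
  obtain ⟨x, rfl⟩ := (Submodule.mem_span_range_iff_exists_fun L).mp hc
  exact ⟨x, funext fun j => by simp [linearizedMap_apply, hG, Finset.sum_apply]⟩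

end FiniteField

open FiniteField in
theorem gabidulin_minimum_rank_distance_general
    (q n k : ℕ)
    (Fq K : Type) [Field Fq] [Fintype Fq] (hFq : Fintype.card Fq = q)
    [Field K] [Fintype K] [Algebra Fq K]
    (g : Fin n → K) (hg : LinearIndependent Fq g)
    (G : Matrix (Fin k) (Fin n) K)
    (hG : ∀ (i : Fin k) (j : Fin n), G i j = g j ^ q ^ (i : ℕ)) :
    ∀ c ∈ Submodule.span K (Set.range fun i : Fin k => G i),
      c ≠ 0 → n - k + 1 ≤ rankWeight Fq c := by
  intro c hc hc0
  subst hFq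
  obtain ⟨x, rfl⟩ := exists_eq_linearizedMap_of_mem_span_rows Fq hG hc
  have hx : x ≠ 0 := by
    rintro rfl
    exact hc0 (funext fun j => by simp [linearizedMap])
  have hrank := (linearizedMap Fq x).finrank_le_finrank_map_add_finrank_ker
    (Submodule.span Fq (Set.range g))
  rw [finrank_span_eq_card hg, Fintype.card_fin, ← rankWeight_map] at hrank
  have hker := finrank_ker_linearizedMap_lt Fq hx
  have hpos := one_le_rankWeight (F := Fq) hc0
  omega

/-- **Minimum rank distance of Gabidulin codes.**
For `K = F_{q^m}` with subfield `F_q` and `k ≤ n ≤ m`, let `Gab(g)` be the code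
generated by the `k × n` Moore matrix `G = (g_j^{q^{i-1}})` with the coordinates of
`g` linearly independent over `F_q`. Then every nonzero codeword has rank weight at
least `n − k + 1`. -/
theorem gabidulin_minimum_rank_distance
    (q m n k : ℕ) (hq : IsPrimePow q) (hk : 0 < k) (hkn : k ≤ n) (hnm : n ≤ m)
    (Fq K : Type) [Field Fq] [Fintype Fq] (hFq : Fintype.card Fq = q)
    [Field K] [Fintype K] [Algebra Fq K] (hK : Fintype.card K = q ^ m)
    (g : Fin n → K) (hg : LinearIndependent Fq g)
    (G : Matrix (Fin k) (Fin n) K)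
    (hG : ∀ (i : Fin k) (j : Fin n), G i j = g j ^ q ^ (i : ℕ)) :
    ∀ c ∈ Submodule.span K (Set.range fun i : Fin k => G i),
      c ≠ 0 → n - k + 1 ≤ rankWeight Fq c :=
  gabidulin_minimum_rank_distance_general q n k Fq K hFq g hg G hG
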